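/- arXiv:1210.2883 — 4 statements merged into one kernel-verified Lean document; each statement's English description precedes it below -/
import Mathlib

section
/- Fix λ > 0 and let x be a BA fixed point. Then x is twice continuously differentiable on [0,∞), x satisfies the differential equation x''(t) − x'(t) + λ(1 − e^{−x(t)}) = 0 for all t ≥ 0, and 0 < x'(t) < λ for all t ≥ 0. -/
open MeasureTheory

/-- φ_λ(y) = λ(1 − e^{−y}). -/
noncomputable def baPhi (lam y : ℝ) : ℝ := lam * (1 - Real.exp (-y))

/-- A BA fixed point: x : [0,∞) → [0,∞) with x(0) = 0, subexponential decay
`e^{-as} x(s) → 0` for every a > 0, x not identically 0, and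
x(t) = ∫₀ᵗ e^u (∫_u^∞ φ_λ(x(s)) e^{−s} ds) du for all t ≥ 0. -/
def IsBAFixedPoint (lam : ℝ) (x : ℝ → ℝ) : Prop :=
  (∀ t, 0 ≤ t → 0 ≤ x t) ∧
  x 0 = 0 ∧
  (∀ a : ℝ, 0 < a →
    Filter.Tendsto (fun s => Real.exp (-(a * s)) * x s) Filter.atTop (nhds 0)) ∧
  (∃ t, 0 ≤ t ∧ x t ≠ 0) ∧
  (∀ t, 0 ≤ t →
    x t = ∫ u in (0:ℝ)..t, Real.exp u * ∫ s in Set.Ioi u, baPhi lam (x s) * Real.exp (-s))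

/-!
A priori nothing, not even measurability, is known about `x`, and a Bochner integral of a
non-integrable function is `0`. Still, the inner integral `g u = ∫_u^∞ φ_λ(x s) e^{-s} ds`
(`baTail lam x u`) is measurable in `u`: the set of `u ≥ 0` where the integrand is integrable on `(u, ∞)` is an upper
set, `g` vanishes off it and is `λ`-Lipschitz on it. Since moreover `|e^u g u| ≤ λ`, the fixed-point
equation exhibits `x` as the primitive of a bounded measurable function, so `x` is continuous.
Then all integrands are continuous and the fundamental theorem of calculus gives `x' = e^t g` and
`g' = -φ_λ(x) e^{-t}`, i.e. `x'' = x' - φ_λ(x)`. Finally `0 ≤ φ_λ(x) < λ`, with `φ_λ(x s) > 0` for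
large `s` because `x` is nondecreasing and not identically zero, so `0 < g t < λ e^{-t}`.
-/

open Set MeasureTheory Topology

section General

variable {E : Type*} [NormedAddCommGroup E] [NormedSpace ℝ E]

theorem Icc_mem_nhdsWithin_Ici_of_lt {a b t : ℝ} (h : t < b) : Icc a b ∈ 𝓝[Ici a] t := by
  simpa only [Ici_inter_Iic] using inter_mem_nhdsWithin (Ici a) (Iic_mem_nhds h)

theorem continuousOn_primitive_Ici {f : ℝ → E} {a : ℝ} (hf : ∀ b, IntegrableOn f (Ioc a b)) :
    ContinuousOn (fun u => ∫ s in a..u, f s) (Ici a) := by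
  intro t (ht : a ≤ t)
  have hint : IntervalIntegrable f volume (min a a) (max a (t + 1)) := by
    rw [min_self, max_eq_right (by linarith)]
    exact (intervalIntegrable_iff_integrableOn_Ioc_of_le (by linarith)).2 (hf _)
  exact (intervalIntegral.continuousWithinAt_primitive (measure_singleton t) hint)
    |>.mono_of_mem_nhdsWithin (Icc_mem_nhdsWithin_Ici_of_lt (lt_add_one t))

theorem hasDerivWithinAt_integral_Ici [CompleteSpace E] {f : ℝ → E} {a b : ℝ}
    (hf : ContinuousOn f (Ici a)) (hb : a ≤ b) :
    HasDerivWithinAt (fun u => ∫ s in a..u, f s) (f b) (Ici a) b := by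
  have : Fact (b ∈ Icc a (b + 1)) := ⟨⟨hb, by linarith⟩⟩
  have hf' : ContinuousOn f (Icc a (b + 1)) := hf.mono Icc_subset_Ici_self
  refine HasDerivWithinAt.mono_of_mem_nhdsWithin ?_ (Icc_mem_nhdsWithin_Ici_of_lt (lt_add_one b))
  exact intervalIntegral.integral_hasDerivWithinAt_right
    (hf'.mono (uIcc_subset_Icc (left_mem_Icc.2 (by linarith)) this.out)).intervalIntegrable
    (hf'.stronglyMeasurableAtFilter_nhdsWithin measurableSet_Icc b) (hf' b this.out)

theorem lipschitzOnWith_integral_Ioi {f : ℝ → E} {a M : ℝ} (hf : ∀ s, a < s → ‖f s‖ ≤ M) :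
    LipschitzOnWith M.toNNReal (fun u => ∫ s in Ioi u, f s)
      {u | a ≤ u ∧ IntegrableOn f (Ioi u)} := by
  refine LipschitzOnWith.of_dist_le' fun u hu v hv => ?_
  rw [dist_eq_norm, intervalIntegral.integral_Ioi_sub_Ioi' hu.2 hv.2, Real.dist_eq, abs_sub_comm]
  exact intervalIntegral.norm_integral_le_of_norm_le_const fun s hs =>
    hf s ((le_min hu.1 hv.1).trans_lt hs.1)

theorem aestronglyMeasurable_integral_Ioi {f : ℝ → E} {a M : ℝ} (hf : ∀ s, a < s → ‖f s‖ ≤ M) :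
    AEStronglyMeasurable (fun u => ∫ s in Ioi u, f s) (volume.restrict (Ici a)) := by
  set I := {u | a ≤ u ∧ IntegrableOn f (Ioi u)}
  have hI : MeasurableSet I := by
    refine IsUpperSet.ordConnected (fun u v huv hu => ?_) |>.measurableSet
    exact ⟨hu.1.trans huv, hu.2.mono_set (Ioi_subset_Ioi huv)⟩
  have hind : AEStronglyMeasurable (I.indicator fun u => ∫ s in Ioi u, f s) volume :=
    (aestronglyMeasurable_indicator_iff hI).2
      ((lipschitzOnWith_integral_Ioi hf).continuousOn.aestronglyMeasurable hI)
  refine hind.restrict.congr (ae_restrict_of_forall_mem measurableSet_Ici fun u hu => ?_)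
  by_cases hu' : u ∈ I
  · exact indicator_of_mem hu' _
  · exact (indicator_of_notMem hu' _).trans (integral_undef fun hint => hu' ⟨hu, hint⟩).symm

theorem setIntegral_Ioi_pos {h : ℝ → ℝ} {u v : ℝ} (hint : IntegrableOn h (Ioi u))
    (hnn : ∀ s, u < s → 0 ≤ h s) (hpos : ∀ s, v < s → 0 < h s) : 0 < ∫ s in Ioi u, h s := by
  rw [setIntegral_pos_iff_support_of_nonneg_ae
    (ae_restrict_of_forall_mem measurableSet_Ioi hnn) hint]
  refine lt_of_lt_of_le ?_ (measure_mono (s := Ioi (max u v)) fun s (hs : max u v < s) =>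
    ⟨(hpos s ((le_max_right u v).trans_lt hs)).ne', (le_max_left u v).trans_lt hs⟩)
  simp [Real.volume_Ioi]

end General

theorem contDiffOn_two_of_hasDerivWithinAt {𝕜 F : Type*} [NontriviallyNormedField 𝕜]
    [NormedAddCommGroup F] [NormedSpace 𝕜 F] {s : Set 𝕜} (hs : UniqueDiffOn 𝕜 s)
    {f f' f'' : 𝕜 → F} (hf : ∀ t ∈ s, HasDerivWithinAt f (f' t) s t)
    (hf' : ∀ t ∈ s, HasDerivWithinAt f' (f'' t) s t) (hf'' : ContinuousOn f'' s) :
    ContDiffOn 𝕜 2 f s := by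
  rw [show (2 : WithTop ℕ∞) = 1 + 1 from rfl, contDiffOn_succ_iff_derivWithin hs]
  refine ⟨fun t ht => (hf t ht).differentiableWithinAt, by simp, ?_⟩
  refine ContDiffOn.congr ?_ fun t ht => (hf t ht).derivWithin (hs t ht)
  rw [contDiffOn_one_iff_derivWithin hs]
  exact ⟨fun t ht => (hf' t ht).differentiableWithinAt,
    hf''.congr fun t ht => (hf' t ht).derivWithin (hs t ht)⟩

open Real

theorem exp_mul_mul_exp_neg (a u : ℝ) : exp u * (a * exp (-u)) = a := by
  rw [mul_left_comm, ← exp_add, add_neg_cancel, exp_zero, mul_one]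

section BAFixedPoint

variable {lam : ℝ} {x : ℝ → ℝ} {t u : ℝ}

theorem baPhi_nonneg (hlam : 0 ≤ lam) {y : ℝ} (hy : 0 ≤ y) : 0 ≤ baPhi lam y :=
  mul_nonneg hlam (sub_nonneg.2 (exp_le_one_iff.2 (neg_nonpos.2 hy)))

theorem baPhi_pos (hlam : 0 < lam) {y : ℝ} (hy : 0 < y) : 0 < baPhi lam y :=
  mul_pos hlam (sub_pos.2 (exp_lt_one_iff.2 (neg_lt_zero.2 hy)))

theorem baPhi_le (hlam : 0 ≤ lam) (y : ℝ) : baPhi lam y ≤ lam :=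
  mul_le_of_le_one_right hlam (sub_le_self 1 (exp_pos (-y)).le)

theorem baPhi_lt (hlam : 0 < lam) (y : ℝ) : baPhi lam y < lam :=
  mul_lt_of_lt_one_right hlam (sub_lt_self 1 (exp_pos (-y)))

theorem continuous_baPhi : Continuous (baPhi lam) := by
  unfold baPhi
  fun_prop

theorem norm_baPhi_mul_exp_le (hlam : 0 ≤ lam) {y : ℝ} (hy : 0 ≤ y) (s : ℝ) :
    ‖baPhi lam y * exp (-s)‖ ≤ lam * exp (-s) := by
  rw [norm_mul, norm_of_nonneg (baPhi_nonneg hlam hy), norm_of_nonneg (exp_pos _).le]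
  exact mul_le_mul_of_nonneg_right (baPhi_le hlam y) (exp_pos _).le

noncomputable def baTail (lam : ℝ) (x : ℝ → ℝ) (u : ℝ) : ℝ :=
  ∫ s in Ioi u, baPhi lam (x s) * exp (-s)

theorem baTail_nonneg (hlam : 0 ≤ lam) (hnn : ∀ t, 0 ≤ t → 0 ≤ x t) (hu : 0 ≤ u) :
    0 ≤ baTail lam x u :=
  setIntegral_nonneg measurableSet_Ioi fun s hs =>
    mul_nonneg (baPhi_nonneg hlam (hnn s (hu.trans (le_of_lt hs)))) (exp_pos _).le

theorem norm_baTail_le (hlam : 0 ≤ lam) (hnn : ∀ t, 0 ≤ t → 0 ≤ x t) (hu : 0 ≤ u) :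
    ‖baTail lam x u‖ ≤ lam * exp (-u) :=
  calc ‖baTail lam x u‖ ≤ ∫ s in Ioi u, lam * exp (-s) :=
        norm_integral_le_of_norm_le ((integrableOn_exp_neg_Ioi u).const_mul lam)
          (ae_restrict_of_forall_mem measurableSet_Ioi fun s hs =>
            norm_baPhi_mul_exp_le hlam (hnn s (hu.trans (le_of_lt hs))) s)
    _ = lam * exp (-u) := by rw [integral_const_mul, integral_exp_neg_Ioi]

theorem norm_exp_mul_baTail_le (hlam : 0 ≤ lam) (hnn : ∀ t, 0 ≤ t → 0 ≤ x t) (hu : 0 ≤ u) :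
    ‖exp u * baTail lam x u‖ ≤ lam :=
  calc ‖exp u * baTail lam x u‖ ≤ exp u * (lam * exp (-u)) := by
        rw [norm_mul, norm_of_nonneg (exp_pos u).le]
        exact mul_le_mul_of_nonneg_left (norm_baTail_le hlam hnn hu) (exp_pos u).le
    _ = lam := exp_mul_mul_exp_neg lam u

theorem aestronglyMeasurable_exp_mul_baTail (hlam : 0 ≤ lam) (hnn : ∀ t, 0 ≤ t → 0 ≤ x t) :
    AEStronglyMeasurable (fun u => exp u * baTail lam x u) (volume.restrict (Ici 0)) :=
  continuous_exp.aestronglyMeasurable.mul <| aestronglyMeasurable_integral_Ioi fun s hs =>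
    (norm_baPhi_mul_exp_le hlam (hnn s hs.le) s).trans
      (mul_le_of_le_one_right hlam (exp_le_one_iff.2 (neg_nonpos.2 hs.le)))

theorem continuousOn_baPhi_mul_exp (hc : ContinuousOn x (Ici 0)) :
    ContinuousOn (fun s => baPhi lam (x s) * exp (-s)) (Ici 0) :=
  (continuous_baPhi.comp_continuousOn hc).mul (continuous_exp.comp continuous_neg).continuousOn

theorem integrableOn_baPhi_mul_exp (hlam : 0 ≤ lam) (hnn : ∀ t, 0 ≤ t → 0 ≤ x t)
    (hc : ContinuousOn x (Ici 0)) (hu : 0 ≤ u) :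
    IntegrableOn (fun s => baPhi lam (x s) * exp (-s)) (Ioi u) :=
  ((integrableOn_exp_neg_Ioi u).const_mul lam).mono'
    (((continuousOn_baPhi_mul_exp hc).mono fun _ hs => hu.trans (le_of_lt hs))
      |>.aestronglyMeasurable measurableSet_Ioi)
    (ae_restrict_of_forall_mem measurableSet_Ioi fun s hs =>
      norm_baPhi_mul_exp_le hlam (hnn s (hu.trans (le_of_lt hs))) s)

theorem hasDerivWithinAt_baTail (hlam : 0 ≤ lam) (hnn : ∀ t, 0 ≤ t → 0 ≤ x t)
    (hc : ContinuousOn x (Ici 0)) (ht : 0 ≤ t) :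
    HasDerivWithinAt (baTail lam x) (-(baPhi lam (x t) * exp (-t))) (Ici 0) t := by
  have hsplit : ∀ u ∈ Ici (0 : ℝ), baTail lam x u =
      baTail lam x 0 - ∫ s in (0 : ℝ)..u, baPhi lam (x s) * exp (-s) := fun u hu => by
    rw [baTail, baTail, ← intervalIntegral.integral_Ioi_sub_Ioi
      (integrableOn_baPhi_mul_exp hlam hnn hc le_rfl) hu, sub_sub_cancel]
  exact ((hasDerivWithinAt_integral_Ici (continuousOn_baPhi_mul_exp hc) ht).const_sub _).congr
    hsplit (hsplit t ht)

theorem hasDerivWithinAt_exp_mul_baTail (hlam : 0 ≤ lam) (hnn : ∀ t, 0 ≤ t → 0 ≤ x t)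
    (hc : ContinuousOn x (Ici 0)) (ht : 0 ≤ t) :
    HasDerivWithinAt (fun u => exp u * baTail lam x u)
      (exp t * baTail lam x t - baPhi lam (x t)) (Ici 0) t := by
  refine ((hasDerivAt_exp t).hasDerivWithinAt.mul
    (hasDerivWithinAt_baTail hlam hnn hc ht)).congr_deriv ?_
  rw [mul_neg, exp_mul_mul_exp_neg, sub_eq_add_neg]

theorem continuousOn_exp_mul_baTail (hlam : 0 ≤ lam) (hnn : ∀ t, 0 ≤ t → 0 ≤ x t)
    (hc : ContinuousOn x (Ici 0)) : ContinuousOn (fun u => exp u * baTail lam x u) (Ici 0) :=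
  fun _ ht => (hasDerivWithinAt_exp_mul_baTail hlam hnn hc ht).continuousWithinAt

theorem baTail_lt (hlam : 0 < lam) (hnn : ∀ t, 0 ≤ t → 0 ≤ x t)
    (hc : ContinuousOn x (Ici 0)) (hu : 0 ≤ u) : baTail lam x u < lam * exp (-u) := by
  have hint := integrableOn_baPhi_mul_exp hlam.le hnn hc hu
  have hexp := (integrableOn_exp_neg_Ioi u).const_mul lam
  have hlt : ∀ s, baPhi lam (x s) * exp (-s) < lam * exp (-s) := fun s =>
    mul_lt_mul_of_pos_right (baPhi_lt hlam _) (exp_pos _)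
  have hpos := setIntegral_Ioi_pos (v := u)
    (h := fun s => lam * exp (-s) - baPhi lam (x s) * exp (-s)) (hexp.sub hint)
    (fun s _ => sub_nonneg.2 (hlt s).le) (fun s _ => sub_pos.2 (hlt s))
  rwa [integral_sub hexp hint, integral_const_mul, integral_exp_neg_Ioi, sub_pos] at hpos

theorem baTail_pos (hlam : 0 < lam) (hnn : ∀ t, 0 ≤ t → 0 ≤ x t)
    (hc : ContinuousOn x (Ici 0)) {v : ℝ} (hv : ∀ s, v < s → 0 < x s) (hu : 0 ≤ u) :
    0 < baTail lam x u :=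
  setIntegral_Ioi_pos (integrableOn_baPhi_mul_exp hlam.le hnn hc hu)
    (fun s hs => mul_nonneg (baPhi_nonneg hlam.le (hnn s (hu.trans hs.le))) (exp_pos _).le)
    (fun s hs => mul_pos (baPhi_pos hlam (hv s hs)) (exp_pos _))

namespace IsBAFixedPoint

theorem continuousOn (hlam : 0 ≤ lam) (hx : IsBAFixedPoint lam x) : ContinuousOn x (Ici 0) := by
  obtain ⟨hnn, -, -, -, heq⟩ := hx
  have hint : ∀ b, IntegrableOn (fun u => exp u * baTail lam x u) (Ioc 0 b) := fun b =>
    Integrable.of_bound ((aestronglyMeasurable_exp_mul_baTail hlam hnn).mono_measure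
      (Measure.restrict_mono (Ioc_subset_Icc_self.trans Icc_subset_Ici_self) le_rfl)) lam
      (ae_restrict_of_forall_mem measurableSet_Ioc fun u hu =>
        norm_exp_mul_baTail_le hlam hnn hu.1.le)
  exact (continuousOn_primitive_Ici hint).congr heq

theorem hasDerivWithinAt (hlam : 0 ≤ lam) (hx : IsBAFixedPoint lam x) (ht : 0 ≤ t) :
    HasDerivWithinAt x (exp t * baTail lam x t) (Ici 0) t :=
  (hasDerivWithinAt_integral_Ici (continuousOn_exp_mul_baTail hlam hx.1 (hx.continuousOn hlam))
    ht).congr hx.2.2.2.2 (hx.2.2.2.2 t ht)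

theorem monotoneOn (hlam : 0 ≤ lam) (hx : IsBAFixedPoint lam x) : MonotoneOn x (Ici 0) :=
  monotoneOn_of_hasDerivWithinAt_nonneg (convex_Ici 0) (hx.continuousOn hlam)
    (fun _ ht => (hx.hasDerivWithinAt hlam (interior_subset ht)).mono interior_subset)
    (fun t ht => mul_nonneg (exp_pos t).le (baTail_nonneg hlam hx.1 (interior_subset ht)))

end IsBAFixedPoint

end BAFixedPoint

/-- any BA fixed point is twice continuously differentiable on [0,∞),
satisfies x'' − x' + λ(1 − e^{−x}) = 0 there, and 0 < x' < λ on [0,∞). -/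
theorem ba_fixed_point_regularity {lam : ℝ} (hlam : 0 < lam) {x : ℝ → ℝ}
    (hx : IsBAFixedPoint lam x) :
    ContDiffOn ℝ 2 x (Set.Ici 0) ∧
    (∀ t, 0 ≤ t →
      derivWithin (derivWithin x (Set.Ici 0)) (Set.Ici 0) t
        - derivWithin x (Set.Ici 0) t + lam * (1 - Real.exp (-x t)) = 0) ∧
    (∀ t, 0 ≤ t →
      0 < derivWithin x (Set.Ici 0) t ∧ derivWithin x (Set.Ici 0) t < lam) := by
  have hnn := hx.1
  have hc := hx.continuousOn hlam.le
  have hx' := fun t (ht : t ∈ Ici (0 : ℝ)) => hx.hasDerivWithinAt hlam.le ht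
  have hx'' := fun t (ht : t ∈ Ici (0 : ℝ)) => hasDerivWithinAt_exp_mul_baTail hlam.le hnn hc ht
  have d1 : ∀ t ∈ Ici (0 : ℝ), derivWithin x (Ici 0) t = exp t * baTail lam x t :=
    fun t ht => (hx' t ht).derivWithin (uniqueDiffOn_Ici 0 t ht)
  have d2 : ∀ t ∈ Ici (0 : ℝ), derivWithin (derivWithin x (Ici 0)) (Ici 0) t =
      exp t * baTail lam x t - baPhi lam (x t) := fun t ht => by
    rw [derivWithin_congr d1 (d1 t ht)]
    exact (hx'' t ht).derivWithin (uniqueDiffOn_Ici 0 t ht)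
  obtain ⟨t₁, ht₁, hxt₁⟩ := hx.2.2.2.1
  have hpos : ∀ s, t₁ < s → 0 < x s := fun s hs =>
    ((hnn t₁ ht₁).lt_of_ne hxt₁.symm).trans_le
      (hx.monotoneOn hlam.le ht₁ (ht₁.trans hs.le) hs.le)
  refine ⟨contDiffOn_two_of_hasDerivWithinAt (uniqueDiffOn_Ici 0) hx' hx''
    ((continuousOn_exp_mul_baTail hlam.le hnn hc).sub (continuous_baPhi.comp_continuousOn hc)),
    fun t ht => ?_, fun t ht => ⟨?_, ?_⟩⟩
  · rw [d2 t ht, d1 t ht, baPhi]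
    ring
  · rw [d1 t ht]
    exact mul_pos (exp_pos t) (baTail_pos hlam hnn hc hpos ht)
  · calc derivWithin x (Ici 0) t = exp t * baTail lam x t := d1 t ht
      _ < exp t * (lam * exp (-t)) := by gcongr; exact baTail_lt hlam hnn hc ht
      _ = lam := exp_mul_mul_exp_neg lam t
end

section
/- Let d > 1 be real and λ₁ = 2d − 1 − 2√(d(d−1)). For λ with λ₁ < λ < 1, define g_d(x) = (1 + λ)/x + log(x²/(λd)) − 2 for x > 0. Then g_d attains its minimum over (0,∞) at x = (1 + λ)/2, and this minimum value, namely log((1+λ)²/(4λd)), is strictly negative. -/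
/-- for d > 1 and λ₁ = 2d − 1 − 2√(d(d−1)) < λ < 1, the function
g_d(x) = (1+λ)/x + log(x²/(λd)) − 2 attains its minimum over (0,∞) at
x = (1+λ)/2, and this minimum value log((1+λ)²/(4λd)) is negative. -/
theorem gd_min_neg {d lam : ℝ} (hd : 1 < d)
    (hlam1 : 2 * d - 1 - 2 * Real.sqrt (d * (d - 1)) < lam) (hlam2 : lam < 1) :
    (∀ x : ℝ, 0 < x →
      (1 + lam) / ((1 + lam) / 2) + Real.log (((1 + lam) / 2) ^ 2 / (lam * d)) - 2
        ≤ (1 + lam) / x + Real.log (x ^ 2 / (lam * d)) - 2) ∧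
    (1 + lam) / ((1 + lam) / 2) + Real.log (((1 + lam) / 2) ^ 2 / (lam * d)) - 2
      = Real.log ((1 + lam) ^ 2 / (4 * lam * d)) ∧
    Real.log ((1 + lam) ^ 2 / (4 * lam * d)) < 0 := by
  set s := Real.sqrt (d * (d - 1)) with hs
  have hs0 : 0 ≤ s := Real.sqrt_nonneg _
  have hs2 : s ^ 2 = d * (d - 1) := Real.sq_sqrt (by nlinarith)
  -- λ₁ > 0, hence lam > 0
  have hslt : s < (2 * d - 1) / 2 := by
    rw [hs, show (2 * d - 1) / 2 = Real.sqrt (((2 * d - 1) / 2) ^ 2) by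
      rw [Real.sqrt_sq (by linarith)]]
    exact Real.sqrt_lt_sqrt (by nlinarith) (by nlinarith)
  have hlam0 : 0 < lam := by nlinarith
  have hd0 : 0 < d := by linarith
  have hld : 0 < lam * d := mul_pos hlam0 hd0
  have h1l : 0 < 1 + lam := by linarith
  have hm : (0:ℝ) < (1 + lam) / 2 := by linarith
  -- key quadratic fact: (1+λ)² < 4λd
  have hquad : (1 + lam) ^ 2 < 4 * lam * d := by nlinarith [sq_nonneg (lam - 1)]
  have harg : ((1 + lam) / 2) ^ 2 / (lam * d) = (1 + lam) ^ 2 / (4 * lam * d) := by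
    field_simp; ring
  have hsimp : (1 + lam) / ((1 + lam) / 2) = 2 := by
    field_simp
  refine ⟨?_, ?_, ?_⟩
  · intro x hx
    rw [harg, hsimp]
    have hxm : 0 < x / ((1 + lam) / 2) := div_pos hx hm
    have hlog : 1 - ((1 + lam) / 2) / x ≤ Real.log (x / ((1 + lam) / 2)) := by
      have := Real.log_le_sub_one_of_pos (show 0 < ((1 + lam) / 2) / x from div_pos hm hx)
      rw [Real.log_div (ne_of_gt hm) (ne_of_gt hx)] at this
      rw [Real.log_div (ne_of_gt hx) (ne_of_gt hm)]
      linarith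
    have hlogx : Real.log (x ^ 2 / (lam * d)) =
        Real.log ((1 + lam) ^ 2 / (4 * lam * d)) + 2 * Real.log (x / ((1 + lam) / 2)) := by
      rw [Real.log_div (by positivity) (ne_of_gt hld),
        Real.log_div (by positivity) (by positivity),
        Real.log_div (ne_of_gt hx) (ne_of_gt hm),
        Real.log_pow, Real.log_pow, show (4:ℝ) * lam * d = 4 * (lam * d) by ring,
        Real.log_mul (by norm_num) (ne_of_gt hld),
        show (4:ℝ) = 2 ^ 2 by norm_num, Real.log_pow]
      push_cast
      have : Real.log ((1 + lam) / 2) = Real.log (1 + lam) - Real.log 2 :=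
        Real.log_div (ne_of_gt h1l) (by norm_num)
      rw [this]; ring
    rw [hlogx]
    have hdivs : (1 + lam) / x = 2 * (((1 + lam) / 2) / x) := by
      field_simp
    rw [hdivs]
    nlinarith [hlog]
  · rw [harg, hsimp]; ring
  · have := Real.log_lt_log (by positivity : (0:ℝ) < (1 + lam) ^ 2 / (4 * lam * d))
      (show (1 + lam) ^ 2 / (4 * lam * d) < 1 by
        rw [div_lt_one (by positivity)]; exact hquad)
    simpa using this
end

section
/- Let 0 < λ < 1 and n ≥ 1 be an integer. Let ξ₁, …, ξₙ, D₁, …, Dₙ be independent real random variables on a probability space, where each ξᵢ is exponentially distributed with rate λ (law with density λe^{−λx} on [0,∞)) and each Dᵢ is exponentially distributed with rate 1 (law with density e^{−x} on [0,∞)). Then P(ξ₁ + ⋯ + ξₙ < D₁ + ⋯ + Dₙ) ≤ (4λ/(1+λ)²)ⁿ. -/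
open MeasureTheory ProbabilityTheory
open Real

/-! Chernoff's bound: for `0 ≤ t < 1`, independence gives
`P(∑ ξᵢ ≤ ∑ Dᵢ) ≤ E[exp (t (∑ Dᵢ - ∑ ξᵢ))] = (λ / (λ + t))ⁿ (1 / (1 - t))ⁿ`.
The minimising `t = (1 - λ) / 2` turns the two factors into `2λ / (1 + λ)` and `2 / (1 + λ)`. -/

section ExpMeasure

variable {r s : ℝ}

@[fun_prop]
lemma measurable_exponentialPDF (r : ℝ) : Measurable (exponentialPDF r) :=
  (measurable_exponentialPDFReal r).ennreal_ofReal

/-- Exponential tilting: it reduces the moment generating function of `Exp(r)` to the total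
mass of `Exp(r - s)`. -/
lemma exponentialPDF_mul_exp_mul (hr : 0 < r) (hs : s < r) (x : ℝ) :
    exponentialPDF r x * ENNReal.ofReal (exp (s * x))
      = ENNReal.ofReal (r / (r - s)) * exponentialPDF (r - s) x := by
  rcases lt_or_ge x 0 with hx | hx
  · simp [exponentialPDF_of_neg hx]
  rw [exponentialPDF_of_nonneg hx, exponentialPDF_of_nonneg hx,
    ← ENNReal.ofReal_mul (by positivity), ← ENNReal.ofReal_mul (div_nonneg hr.le (by linarith))]
  congr 1
  rw [mul_assoc, ← exp_add]
  field_simp [(sub_pos.2 hs).ne']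
  ring_nf

lemma lintegral_exp_mul_expMeasure (hr : 0 < r) (hs : s < r) :
    ∫⁻ x, ENNReal.ofReal (exp (s * x)) ∂expMeasure r = ENNReal.ofReal (r / (r - s)) := by
  have hdensity : expMeasure r = volume.withDensity (exponentialPDF r) := rfl
  rw [hdensity, lintegral_withDensity_eq_lintegral_mul₀ (by fun_prop) (by fun_prop)]
  simp only [Pi.mul_apply, exponentialPDF_mul_exp_mul hr hs]
  rw [lintegral_const_mul _ (by fun_prop), lintegral_exponentialPDF_eq_one (by linarith), mul_one]

lemma integrable_exp_mul_expMeasure (hr : 0 < r) (hs : s < r) :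
    Integrable (fun x => exp (s * x)) (expMeasure r) := by
  rw [← lintegral_ofReal_ne_top_iff_integrable (by fun_prop)
    (ae_of_all _ fun x => (exp_pos _).le), lintegral_exp_mul_expMeasure hr hs]
  exact ENNReal.ofReal_ne_top

lemma mgf_id_expMeasure (hr : 0 < r) (hs : s < r) : mgf id (expMeasure r) s = r / (r - s) := by
  rw [mgf, integral_eq_lintegral_of_nonneg_ae (ae_of_all _ fun x => (exp_pos _).le)
    (by fun_prop)]
  simp only [id]
  rw [lintegral_exp_mul_expMeasure hr hs, ENNReal.toReal_ofReal (div_nonneg hr.le (by linarith))]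

variable {Ω : Type*} [MeasurableSpace Ω] {μ : Measure Ω} {X : Ω → ℝ}

lemma integrable_exp_mul_of_map_eq_expMeasure (hX : AEMeasurable X μ)
    (hlaw : μ.map X = expMeasure r) (hr : 0 < r) (hs : s < r) :
    Integrable (fun ω => exp (s * X ω)) μ := by
  have h := integrable_exp_mul_expMeasure hr hs
  rw [← hlaw, integrable_map_measure (by fun_prop) hX] at h
  exact h

lemma mgf_of_map_eq_expMeasure (hX : AEMeasurable X μ) (hlaw : μ.map X = expMeasure r)
    (hr : 0 < r) (hs : s < r) : mgf X μ s = r / (r - s) := by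
  rw [← mgf_id_map hX, hlaw, mgf_id_expMeasure hr hs]

end ExpMeasure

lemma measureReal_sum_le_sum_le_prod_mgf {Ω ι κ : Type*} [MeasurableSpace Ω] {μ : Measure Ω}
    [Fintype ι] [Fintype κ] {X : ι → Ω → ℝ} {Y : κ → Ω → ℝ}
    (hindep : iIndepFun (Sum.elim X Y) μ) (hX : ∀ i, Measurable (X i))
    (hY : ∀ j, Measurable (Y j)) {t : ℝ} (ht : 0 ≤ t)
    (hXint : ∀ i, Integrable (fun ω => exp (-t * X i ω)) μ)
    (hYint : ∀ j, Integrable (fun ω => exp (t * Y j ω)) μ) :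
    μ.real {ω | ∑ i, X i ω ≤ ∑ j, Y j ω} ≤ (∏ i, mgf (X i) μ (-t)) * ∏ j, mgf (Y j) μ t := by
  have := hindep.isProbabilityMeasure
  set Z : ι ⊕ κ → Ω → ℝ := Sum.elim (fun i => -X i) Y with hZ
  have hZmeas : ∀ k, Measurable (Z k) := by
    rintro (i | j)
    exacts [(hX i).neg, hY j]
  have hZindep : iIndepFun Z μ := by
    convert hindep.comp (Sum.elim (fun _ => Neg.neg) (fun _ => id))
      (by rintro (i | j); exacts [measurable_neg, measurable_id]) using 1
    ext (i | j) <;> rfl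
  have hZint : ∀ k ∈ Finset.univ, Integrable (fun ω => exp (t * Z k ω)) μ := by
    rintro (i | j) -
    · simpa [hZ] using hXint i
    · exact hYint j
  calc μ.real {ω | ∑ i, X i ω ≤ ∑ j, Y j ω} = μ.real {ω | 0 ≤ (∑ k, Z k) ω} := by
        congr 1; ext ω
        simp [hZ, Fintype.sum_sum_type]
    _ ≤ exp (-t * 0) * mgf (∑ k, Z k) μ t :=
        measure_ge_le_exp_mul_mgf 0 ht (hZindep.integrable_exp_mul_sum hZmeas hZint)
    _ = (∏ i, mgf (X i) μ (-t)) * ∏ j, mgf (Y j) μ t := by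
        rw [hZindep.mgf_sum hZmeas, Fintype.prod_sum_type]
        simp [hZ, mgf_neg]

theorem exp_race_bound_general {Ω : Type*} [MeasurableSpace Ω] (μ : Measure Ω)
    [IsProbabilityMeasure μ] {lam : ℝ} (hlam0 : 0 < lam) (hlam1 : lam < 1)
    {n : ℕ} (ξ D : Fin n → Ω → ℝ)
    (hξmeas : ∀ i, Measurable (ξ i)) (hDmeas : ∀ i, Measurable (D i))
    (hindep : iIndepFun (Sum.elim ξ D) μ)
    (hξlaw : ∀ i, μ.map (ξ i) = expMeasure lam)
    (hDlaw : ∀ i, μ.map (D i) = expMeasure 1) :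
    μ {ω | ∑ i, ξ i ω < ∑ i, D i ω}
      ≤ ENNReal.ofReal ((4 * lam / (1 + lam) ^ 2) ^ n) := by
  set t := (1 - lam) / 2 with ht
  have hξt : -t < lam := by linarith
  have hDt : t < 1 := by linarith
  have hchernoff := measureReal_sum_le_sum_le_prod_mgf hindep hξmeas hDmeas (by linarith)
    (fun i => integrable_exp_mul_of_map_eq_expMeasure (hξmeas i).aemeasurable (hξlaw i) hlam0 hξt)
    (fun i => integrable_exp_mul_of_map_eq_expMeasure (hDmeas i).aemeasurable (hDlaw i) one_pos hDt)
  have hprod : (∏ i, mgf (ξ i) μ (-t)) * ∏ i, mgf (D i) μ t = (4 * lam / (1 + lam) ^ 2) ^ n := by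
    simp only [fun i => mgf_of_map_eq_expMeasure (hξmeas i).aemeasurable (hξlaw i) hlam0 hξt,
      fun i => mgf_of_map_eq_expMeasure (hDmeas i).aemeasurable (hDlaw i) one_pos hDt,
      Finset.prod_const, Finset.card_univ, Fintype.card_fin, ← mul_pow]
    have hξrate : lam - -t = (1 + lam) / 2 := by rw [ht]; ring
    have hDrate : 1 - t = (1 + lam) / 2 := by rw [ht]; ring
    rw [hξrate, hDrate]
    field_simp
    ring
  calc μ {ω | ∑ i, ξ i ω < ∑ i, D i ω} ≤ μ {ω | ∑ i, ξ i ω ≤ ∑ i, D i ω} :=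
        measure_mono fun _ => le_of_lt (α := ℝ)
    _ = ENNReal.ofReal (μ.real {ω | ∑ i, ξ i ω ≤ ∑ i, D i ω}) := (ofReal_measureReal).symm
    _ ≤ ENNReal.ofReal ((4 * lam / (1 + lam) ^ 2) ^ n) :=
        ENNReal.ofReal_le_ofReal (hchernoff.trans_eq hprod)

/-- if ξ₁,…,ξₙ,D₁,…,Dₙ are independent, each ξᵢ ~ Exp(λ) with
0 < λ < 1 and each Dᵢ ~ Exp(1), then
P(ξ₁ + ⋯ + ξₙ < D₁ + ⋯ + Dₙ) ≤ (4λ/(1+λ)²)ⁿ. -/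
theorem exp_race_bound {Ω : Type*} [MeasurableSpace Ω] (μ : Measure Ω)
    [IsProbabilityMeasure μ] {lam : ℝ} (hlam0 : 0 < lam) (hlam1 : lam < 1)
    {n : ℕ} (hn : 1 ≤ n) (ξ D : Fin n → Ω → ℝ)
    (hξmeas : ∀ i, Measurable (ξ i)) (hDmeas : ∀ i, Measurable (D i))
    (hindep : iIndepFun (Sum.elim ξ D) μ)
    (hξlaw : ∀ i, μ.map (ξ i) = expMeasure lam)
    (hDlaw : ∀ i, μ.map (D i) = expMeasure 1) :
    μ {ω | ∑ i, ξ i ω < ∑ i, D i ω}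
      ≤ ENNReal.ofReal ((4 * lam / (1 + lam) ^ 2) ^ n) :=
  exp_race_bound_general μ hlam0 hlam1 ξ D hξmeas hDmeas hindep hξlaw hDlaw
end

section
/- Let x be a CE fixed point for λ ∈ (0,1). Then x is twice continuously differentiable on [0,∞) and satisfies x''(t) − (1 − λ)x'(t) + λ(ψ(x(t)) − x(t)) = 0 for all t ≥ 0. -/
open MeasureTheory

/-- Generating function ψ(x) = Σ_{k≥0} P(k) x^k. -/
noncomputable def genFun (P : ℕ → ℝ) (x : ℝ) : ℝ := ∑' k : ℕ, P k * x ^ k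

/-- Context: P is a probability distribution on ℕ with mean d ∈ (1,∞), and ρ ∈ [0,1)
is the smallest fixed point of its generating function on [0,1]. -/
structure CEContext (P : ℕ → ℝ) (d ρ : ℝ) : Prop where
  P_nonneg : ∀ k, 0 ≤ P k
  P_sum_one : ∑' k : ℕ, P k = 1
  mean_summable : Summable (fun k : ℕ => (k : ℝ) * P k)
  mean_eq : ∑' k : ℕ, (k : ℝ) * P k = d
  d_gt_one : 1 < d
  rho_nonneg : 0 ≤ ρ
  rho_lt_one : ρ < 1
  rho_fixed : genFun P ρ = ρ
  rho_least : ∀ y : ℝ, 0 ≤ y → y ≤ 1 → genFun P y = y → ρ ≤ y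

/-- A CE fixed point for infection rate λ ∈ (0,1): x : [0,∞) → [0,1] non-increasing,
x(0) = 1, x(t) → ρ, and
x(t) = e^{−λt} + λ e^{−λt} ∫₀ᵗ e^{(λ+1)u} (∫_u^∞ ψ(x(s)) e^{−s} ds) du. -/
def IsCEFixedPoint (P : ℕ → ℝ) (ρ lam : ℝ) (x : ℝ → ℝ) : Prop :=
  (∀ t, 0 ≤ t → x t ∈ Set.Icc (0 : ℝ) 1) ∧
  AntitoneOn x (Set.Ici 0) ∧
  x 0 = 1 ∧
  Filter.Tendsto x Filter.atTop (nhds ρ) ∧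
  (∀ t, 0 ≤ t →
    x t = Real.exp (-(lam * t)) + lam * Real.exp (-(lam * t)) *
      ∫ u in (0:ℝ)..t, Real.exp ((lam + 1) * u) *
        ∫ s in Set.Ioi u, genFun P (x s) * Real.exp (-s))

/-!
Put `F(u) = ∫_u^∞ ψ(x(s)) e^{-s} ds`, so that `x(t) = e^{-λt} (1 + λ ∫₀ᵗ e^{(λ+1)u} F(u) du)`.
Since `x` is monotone with values in `[0,1]`, the integrand is measurable and dominated by `e^{-s}`,
so `F` is continuous and the right-hand side is `C¹` with derivative `-λx + λ eᵗ F`. This makes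
`x`, hence `ψ ∘ x`, continuous; then `F' = -ψ(x) e^{-t}`, and differentiating once more gives
`x'' = (1 - λ) x' - λ (ψ(x) - x)` with continuous right-hand side. To differentiate on all of `ℝ`,
`x` is continued to `(-∞, 0]` by the constant `x 0`.
-/

open MeasureTheory Set Real

lemma summable_of_tsum_ne_zero {ι : Type*} {f : ι → ℝ} (h : ∑' i, f i ≠ 0) : Summable f := by
  by_contra hf
  exact h (tsum_eq_zero_of_not_summable hf)

section GeneratingFunction

variable {P : ℕ → ℝ}

lemma norm_genFun_term_le (hP : ∀ k, 0 ≤ P k) {a : ℝ} (ha : a ∈ Icc (0 : ℝ) 1) (k : ℕ) :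
    ‖P k * a ^ k‖ ≤ P k := by
  rw [norm_of_nonneg (mul_nonneg (hP k) (pow_nonneg ha.1 k))]
  exact mul_le_of_le_one_right (hP k) (pow_le_one₀ ha.1 ha.2)

lemma summable_genFun_term (hP : ∀ k, 0 ≤ P k) (hsum : Summable P) {a : ℝ}
    (ha : a ∈ Icc (0 : ℝ) 1) : Summable fun k => P k * a ^ k :=
  .of_norm_bounded hsum (norm_genFun_term_le hP ha)

lemma monotoneOn_genFun (hP : ∀ k, 0 ≤ P k) (hsum : Summable P) :
    MonotoneOn (genFun P) (Icc 0 1) := fun _ ha _ hb hab =>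
  (summable_genFun_term hP hsum ha).tsum_le_tsum
    (fun k => mul_le_mul_of_nonneg_left (pow_le_pow_left₀ ha.1 hab k) (hP k))
    (summable_genFun_term hP hsum hb)

lemma continuousOn_genFun (hP : ∀ k, 0 ≤ P k) (hsum : Summable P) :
    ContinuousOn (genFun P) (Icc 0 1) :=
  continuousOn_tsum (fun k => (continuous_const.mul (continuous_pow k)).continuousOn) hsum
    fun k _ ha => norm_genFun_term_le hP ha k

lemma genFun_mem_Icc (hP : ∀ k, 0 ≤ P k) (hsum : Summable P) (hone : ∑' k, P k = 1) {a : ℝ}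
    (ha : a ∈ Icc (0 : ℝ) 1) : genFun P a ∈ Icc (0 : ℝ) 1 := by
  refine ⟨tsum_nonneg fun k => mul_nonneg (hP k) (pow_nonneg ha.1 k), ?_⟩
  calc genFun P a ≤ genFun P 1 := monotoneOn_genFun hP hsum ha ⟨zero_le_one, le_rfl⟩ ha.2
    _ = 1 := by simp [genFun, hone]

end GeneratingFunction

section TailIntegral

variable {G : ℝ → ℝ}

lemma integral_Ioi_eq_sub_intervalIntegral (hG : ∀ a, IntegrableOn G (Ioi a)) (u : ℝ) :
    ∫ s in Ioi u, G s = (∫ s in Ioi 0, G s) - ∫ s in 0..u, G s := by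
  rw [← intervalIntegral.integral_Ioi_sub_Ioi' (hG 0) (hG u)]
  ring

lemma continuous_integral_Ioi (hG : ∀ a, IntegrableOn G (Ioi a)) :
    Continuous fun u => ∫ s in Ioi u, G s := by
  rw [funext (integral_Ioi_eq_sub_intervalIntegral hG)]
  exact continuous_const.sub <| intervalIntegral.continuous_primitive
    (fun a b => intervalIntegrable_iff.2 ((hG (min a b)).mono_set Ioc_subset_Ioi_self)) 0

lemma hasDerivAt_integral_Ioi (hG : ∀ a, IntegrableOn G (Ioi a)) (hGc : Continuous G) (u : ℝ) :
    HasDerivAt (fun u => ∫ s in Ioi u, G s) (-G u) u := by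
  rw [funext (integral_Ioi_eq_sub_intervalIntegral hG)]
  simpa using ((hGc.integral_hasStrictDerivAt 0 u).hasDerivAt).const_sub _

lemma integrableOn_Ioi_mul_exp_neg {g : ℝ → ℝ} {C : ℝ} (hg : AEStronglyMeasurable g)
    (hC : ∀ s, ‖g s‖ ≤ C) (a : ℝ) : IntegrableOn (fun s => g s * exp (-s)) (Ioi a) := by
  have hexp : IntegrableOn (fun s => exp (-s)) (Ioi a) := by
    simpa using exp_neg_integrableOn_Ioi a one_pos
  exact hexp.bdd_mul hg.restrict (ae_of_all _ hC)

end TailIntegral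

section Calculus

variable {f X : ℝ → ℝ} {a t : ℝ}

lemma contDiff_two_of_hasDerivAt_deriv {f₂ : ℝ → ℝ} (hf : Differentiable ℝ f)
    (hf' : ∀ t, HasDerivAt (deriv f) (f₂ t) t) (hf₂ : Continuous f₂) : ContDiff ℝ 2 f := by
  rw [show (2 : WithTop ℕ∞) = 1 + 1 from rfl, contDiff_succ_iff_deriv, contDiff_one_iff_deriv,
    funext fun t => (hf' t).deriv]
  exact ⟨hf, by simp, fun t => (hf' t).differentiableAt, hf₂⟩

lemma derivWithin_Ici_eq_deriv (h : EqOn f X (Ici a)) (hX : DifferentiableAt ℝ X t)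
    (ht : a ≤ t) : derivWithin f (Ici a) t = deriv X t := by
  rw [derivWithin_congr h (h ht)]
  exact hX.hasDerivAt.hasDerivWithinAt.derivWithin (uniqueDiffOn_Ici a t ht)

lemma derivWithin_derivWithin_Ici_eq_deriv_deriv (h : EqOn f X (Ici a))
    (hX : Differentiable ℝ X) (hX' : DifferentiableAt ℝ (deriv X) t) (ht : a ≤ t) :
    derivWithin (derivWithin f (Ici a)) (Ici a) t = deriv (deriv X) t :=
  derivWithin_Ici_eq_deriv (fun _ hs => derivWithin_Ici_eq_deriv h (hX _) hs) hX' ht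

end Calculus

section RightHandSide

/-- The right-hand side of the CE fixed-point equation in terms of the tail
`F u = ∫_u^∞ ψ(x(s)) e^{-s} ds`. -/
noncomputable def ceRHS (lam : ℝ) (F : ℝ → ℝ) (t : ℝ) : ℝ :=
  exp (-(lam * t)) + lam * exp (-(lam * t)) * ∫ u in (0 : ℝ)..t, exp ((lam + 1) * u) * F u

variable {lam : ℝ} {F g : ℝ → ℝ}

lemma hasDerivAt_ceRHS (hF : Continuous F) (t : ℝ) :
    HasDerivAt (ceRHS lam F) (-lam * ceRHS lam F t + lam * (exp t * F t)) t := by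
  have hE : HasDerivAt (fun t => exp (-(lam * t))) (-lam * exp (-(lam * t))) t := by
    simpa [mul_comm] using ((hasDerivAt_id t).const_mul lam).neg.exp
  have hH : Continuous fun u => exp ((lam + 1) * u) * F u := by fun_prop
  have hI := (hH.integral_hasStrictDerivAt 0 t).hasDerivAt
  have hexp : exp (-(lam * t)) * exp ((lam + 1) * t) = exp t := by
    rw [← exp_add]; ring_nf
  have hX : ceRHS lam F = fun t => exp (-(lam * t)) +
      lam * (exp (-(lam * t)) * ∫ u in (0 : ℝ)..t, exp ((lam + 1) * u) * F u) := by
    funext u; simp only [ceRHS]; ring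
  rw [hX]
  exact (hE.add ((hE.mul hI).const_mul lam)).congr_deriv
    (by linear_combination (lam * F t) * hexp)

lemma deriv_ceRHS (hF : Continuous F) :
    deriv (ceRHS lam F) = fun t => -lam * ceRHS lam F t + lam * (exp t * F t) :=
  funext fun t => (hasDerivAt_ceRHS hF t).deriv

lemma hasDerivAt_deriv_ceRHS (hF' : ∀ t, HasDerivAt F (-(g t * exp (-t))) t) (t : ℝ) :
    HasDerivAt (deriv (ceRHS lam F))
      ((1 - lam) * deriv (ceRHS lam F) t - lam * (g t - ceRHS lam F t)) t := by
  have hF : Continuous F := continuous_iff_continuousAt.2 fun t => (hF' t).continuousAt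
  rw [deriv_ceRHS hF]
  have hinv : exp t * exp (-t) = 1 := by rw [← exp_add]; simp
  exact (((hasDerivAt_ceRHS hF t).const_mul (-lam)).add
    (((hasDerivAt_exp t).mul (hF' t)).const_mul lam)).congr_deriv
    (by linear_combination (-(lam * g t)) * hinv)

lemma contDiff_ceRHS (hF' : ∀ t, HasDerivAt F (-(g t * exp (-t))) t) (hg : Continuous g) :
    ContDiff ℝ 2 (ceRHS lam F) := by
  have hF : Continuous F := continuous_iff_continuousAt.2 fun t => (hF' t).continuousAt
  have hX : Differentiable ℝ (ceRHS lam F) := fun t => (hasDerivAt_ceRHS hF t).differentiableAt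
  have hXc := hX.continuous
  refine contDiff_two_of_hasDerivAt_deriv hX (hasDerivAt_deriv_ceRHS hF') ?_
  rw [deriv_ceRHS hF]
  fun_prop

end RightHandSide

namespace IsCEFixedPoint

variable {P : ℕ → ℝ} {ρ lam : ℝ} {x : ℝ → ℝ}

lemma mem_Icc_max (hx : IsCEFixedPoint P ρ lam x) (s : ℝ) : x (max s 0) ∈ Icc 0 1 :=
  hx.1 _ (le_max_right s 0)

lemma integrableOn_Ioi (hx : IsCEFixedPoint P ρ lam x) (hP : ∀ k, 0 ≤ P k) (hsum : Summable P)
    (hone : ∑' k, P k = 1) (a : ℝ) :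
    IntegrableOn (fun s => genFun P (x (max s 0)) * exp (-s)) (Ioi a) := by
  have hmeas : Measurable fun s => genFun P (x (max s 0)) :=
    Antitone.measurable fun s r hsr => monotoneOn_genFun hP hsum (hx.mem_Icc_max r)
      (hx.mem_Icc_max s) (hx.2.1 (le_max_right s 0) (le_max_right r 0) (max_le_max hsr le_rfl))
  refine integrableOn_Ioi_mul_exp_neg hmeas.aestronglyMeasurable (C := 1) (fun s => ?_) a
  obtain ⟨h0, h1⟩ := genFun_mem_Icc hP hsum hone (hx.mem_Icc_max s)
  rwa [norm_of_nonneg h0]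

lemma eqOn_ceRHS (hx : IsCEFixedPoint P ρ lam x) :
    EqOn x (ceRHS lam fun u => ∫ s in Ioi u, genFun P (x (max s 0)) * exp (-s)) (Ici 0) := by
  intro t ht
  rw [hx.2.2.2.2 t ht, ceRHS]
  refine congrArg _ (congrArg _ (intervalIntegral.integral_congr fun u hu => ?_))
  rw [uIcc_of_le ht] at hu
  refine congrArg _ (setIntegral_congr_fun measurableSet_Ioi fun s hs => ?_)
  simp only [max_eq_left (hu.1.trans hs.le)]

end IsCEFixedPoint

theorem ce_fixed_point_regularity_general {P : ℕ → ℝ} {d ρ : ℝ} (hctx : CEContext P d ρ)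
    {lam : ℝ}
    {x : ℝ → ℝ} (hx : IsCEFixedPoint P ρ lam x) :
    ContDiffOn ℝ 2 x (Set.Ici 0) ∧
    ∀ t, 0 ≤ t →
      derivWithin (derivWithin x (Set.Ici 0)) (Set.Ici 0) t
        - (1 - lam) * derivWithin x (Set.Ici 0) t
        + lam * (genFun P (x t) - x t) = 0 := by
  have hP := hctx.P_nonneg
  have hsum : Summable P := summable_of_tsum_ne_zero (by simp [hctx.P_sum_one])
  have hG := hx.integrableOn_Ioi hP hsum hctx.P_sum_one
  have hxX := hx.eqOn_ceRHS
  have hX : Differentiable ℝ (ceRHS lam _) := fun t =>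
    (hasDerivAt_ceRHS (continuous_integral_Ioi hG) t).differentiableAt
  have hx_cont : Continuous fun s => x (max s 0) :=
    (hX.continuous.continuousOn.congr hxX).comp_continuous (by fun_prop) (le_max_right · 0)
  have hg : Continuous fun s => genFun P (x (max s 0)) :=
    (continuousOn_genFun hP hsum).comp_continuous hx_cont hx.mem_Icc_max
  have hF' := hasDerivAt_integral_Ioi hG (by fun_prop)
  refine ⟨(contDiff_ceRHS hF' hg).contDiffOn.congr hxX, fun t ht => ?_⟩
  rw [derivWithin_derivWithin_Ici_eq_deriv_deriv hxX hX
      (hasDerivAt_deriv_ceRHS hF' t).differentiableAt ht,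
    derivWithin_Ici_eq_deriv hxX (hX t) ht, (hasDerivAt_deriv_ceRHS hF' t).deriv, ← hxX ht,
    max_eq_left ht]
  ring

/-- a CE fixed point is twice continuously differentiable on [0,∞)
and satisfies x'' − (1−λ)x' + λ(ψ(x) − x) = 0 there. -/
theorem ce_fixed_point_regularity {P : ℕ → ℝ} {d ρ : ℝ} (hctx : CEContext P d ρ)
    {lam : ℝ} (hlam0 : 0 < lam) (hlam1 : lam < 1)
    {x : ℝ → ℝ} (hx : IsCEFixedPoint P ρ lam x) :
    ContDiffOn ℝ 2 x (Set.Ici 0) ∧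
    ∀ t, 0 ≤ t →
      derivWithin (derivWithin x (Set.Ici 0)) (Set.Ici 0) t
        - (1 - lam) * derivWithin x (Set.Ici 0) t
        + lam * (genFun P (x t) - x t) = 0 :=
  ce_fixed_point_regularity_general hctx hx
end
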